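/- arXiv:2110.09651 — 3 statements merged into one kernel-verified Lean document; each statement's English description precedes it below -/
import Mathlib

section
/- Let μ and ν be probability measures with densities p₊ and p₋ with respect to a common measure. Then ∫ √(p₊² + p₋²) − 1 ≥ TV(μ, ν), where TV(μ,ν) = (1/2)∫ |p₊ − p₋| is the total variation distance. -/
open MeasureTheory Real

theorem tv_le_arclength_sub_one
    {X : Type*} [MeasurableSpace X] (μ0 : Measure X)
    (pp pm : X → ℝ)
    (hpp_meas : Measurable pp) (hpm_meas : Measurable pm)
    (hpp_nonneg : ∀ x, 0 ≤ pp x) (hpm_nonneg : ∀ x, 0 ≤ pm x)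
    (hpp_int : Integrable pp μ0) (hpm_int : Integrable pm μ0)
    (hpp_one : ∫ x, pp x ∂μ0 = 1) (hpm_one : ∫ x, pm x ∂μ0 = 1) :
    (1 / 2) * ∫ x, |pp x - pm x| ∂μ0 ≤ (∫ x, Real.sqrt (pp x ^ 2 + pm x ^ 2) ∂μ0) - 1 := by
  -- pointwise inequality: (p+q)/2 + |p-q|/2 = max p q ≤ √(p²+q²)
  have hptwise : ∀ x, (pp x + pm x) / 2 + |pp x - pm x| / 2 ≤
      Real.sqrt (pp x ^ 2 + pm x ^ 2) := by
    intro x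
    have h1 : (pp x + pm x) / 2 + |pp x - pm x| / 2 = max (pp x) (pm x) := by
      rcases abs_cases (pp x - pm x) with ⟨h, h2⟩ | ⟨h, h2⟩ <;>
        rcases max_cases (pp x) (pm x) with ⟨h3, h4⟩ | ⟨h3, h4⟩ <;> rw [h, h3] <;> linarith
    rw [h1]
    rcases max_cases (pp x) (pm x) with ⟨h3, _⟩ | ⟨h3, _⟩ <;> rw [h3]
    · rw [Real.le_sqrt (hpp_nonneg x)]
      · nlinarith [sq_nonneg (pm x)]
      · positivity
    · rw [Real.le_sqrt (hpm_nonneg x)]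
      · nlinarith [sq_nonneg (pp x)]
      · positivity
  -- integrability of the sqrt term
  have hsum : Integrable (fun x => pp x + pm x) μ0 := hpp_int.add hpm_int
  have hsqrt_int : Integrable (fun x => Real.sqrt (pp x ^ 2 + pm x ^ 2)) μ0 := by
    refine hsum.mono
      ((hpp_meas.pow_const 2 |>.add (hpm_meas.pow_const 2)).sqrt.aestronglyMeasurable)
      (Filter.Eventually.of_forall fun x => ?_)
    have h0 : 0 ≤ pp x + pm x := by have := hpp_nonneg x; have := hpm_nonneg x; linarith
    rw [Real.norm_eq_abs, Real.norm_eq_abs, abs_of_nonneg (Real.sqrt_nonneg _),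
      abs_of_nonneg h0]
    rw [show pp x + pm x = Real.sqrt ((pp x + pm x) ^ 2) from
      (Real.sqrt_sq h0).symm]
    exact Real.sqrt_le_sqrt (by nlinarith [mul_nonneg (hpp_nonneg x) (hpm_nonneg x)])
  have habs_int : Integrable (fun x => |pp x - pm x|) μ0 := (hpp_int.sub hpm_int).abs
  have hmono : ∫ x, ((pp x + pm x) / 2 + |pp x - pm x| / 2) ∂μ0 ≤
      ∫ x, Real.sqrt (pp x ^ 2 + pm x ^ 2) ∂μ0 :=
    integral_mono ((hsum.div_const 2).add (habs_int.div_const 2))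
      hsqrt_int hptwise
  have hlhs : ∫ x, ((pp x + pm x) / 2 + |pp x - pm x| / 2) ∂μ0 =
      1 + (1 / 2) * ∫ x, |pp x - pm x| ∂μ0 := by
    rw [integral_add (hsum.div_const 2) (habs_int.div_const 2)]
    simp only [integral_div]
    rw [integral_add hpp_int hpm_int, hpp_one, hpm_one]
    ring
  linarith [hmono, hlhs ▸ hmono]
end

section
/- For all a ∈ (0, 1] and all z ∈ [0, π/2], −z ≥ cos(z)/a − arcsin(a) − √(1−a²)/a. -/
open Real Set

theorem cos_lower_bound_ineq
    (a z : ℝ) (ha : a ∈ Set.Ioc (0 : ℝ) 1) (hz : z ∈ Set.Icc (0 : ℝ) (π / 2)) :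
    Real.cos z / a - Real.arcsin a - Real.sqrt (1 - a ^ 2) / a ≤ -z := by
  obtain ⟨ha0, ha1⟩ := ha
  set w := Real.arcsin a with hw
  have hw0 : 0 ≤ w := Real.arcsin_nonneg.mpr ha0.le
  have hwpi : w ≤ π / 2 := Real.arcsin_le_pi_div_two a
  have hsinw : Real.sin w = a := Real.sin_arcsin (by linarith) ha1
  have hcosw : Real.cos w = Real.sqrt (1 - a ^ 2) := Real.cos_arcsin a
  set f : ℝ → ℝ := fun x => Real.cos x + a * x with hf
  have hD : ∀ x : ℝ, HasDerivAt f (a - Real.sin x) x := by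
    intro x
    have h1 := (Real.hasDerivAt_cos x).add ((hasDerivAt_id x).const_mul a)
    simpa [hf, Pi.add_def] using h1.congr_deriv (by ring)
  have hcont : Continuous f := by
    continuity
  have key : f z ≤ f w := by
    rcases le_total z w with hzw | hzw
    · have hmono : MonotoneOn f (Icc 0 w) := by
        apply monotoneOn_of_deriv_nonneg (convex_Icc 0 w) hcont.continuousOn
          (fun x _ => (hD x).differentiableAt.differentiableWithinAt)
        intro x hx
        rw [interior_Icc] at hx
        rw [(hD x).deriv]
        have : Real.sin x ≤ Real.sin w := by
          apply Real.sin_le_sin_of_le_of_le_pi_div_two (by linarith [hx.1]) hwpi hx.2.le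
        linarith [hsinw]
      exact hmono ⟨hz.1, hzw⟩ ⟨hw0, le_refl w⟩ hzw
    · have hanti : AntitoneOn f (Icc w (π / 2)) := by
        apply antitoneOn_of_deriv_nonpos (convex_Icc w (π / 2)) hcont.continuousOn
          (fun x _ => (hD x).differentiableAt.differentiableWithinAt)
        intro x hx
        rw [interior_Icc] at hx
        rw [(hD x).deriv]
        have : Real.sin w ≤ Real.sin x := by
          apply Real.sin_le_sin_of_le_of_le_pi_div_two (by linarith) hx.2.le hx.1.le
        linarith [hsinw]
      exact hanti ⟨le_refl w, hwpi⟩ ⟨hzw, hz.2⟩ hzw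
  have hkey : Real.cos z + a * z ≤ Real.sqrt (1 - a ^ 2) + a * w := by
    have := key
    simp only [hf] at this
    linarith [hcosw ▸ this]
  have hdiv : (Real.cos z - Real.sqrt (1 - a ^ 2)) / a ≤ w - z :=
    (div_le_iff₀ ha0).mpr (by nlinarith)
  rw [sub_div] at hdiv
  linarith
end

section
/- Let μ, ν be probability measures with densities p₊, p₋ (p₋ > 0). Then ∫ √(p₊² + p₋²) = sup over measurable u : X → [0,1] of ∫ p₊·u + ∫ p₋·√(1 − u²). -/
open MeasureTheory Real Set

theorem arclength_variational_u
    {X : Type*} [MeasurableSpace X] (μ0 : Measure X)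
    (pp pm : X → ℝ)
    (hpp_meas : Measurable pp) (hpm_meas : Measurable pm)
    (hpp_nonneg : ∀ x, 0 ≤ pp x) (hpm_pos : ∀ x, 0 < pm x)
    (hpp_int : Integrable pp μ0) (hpm_int : Integrable pm μ0)
    (hpp_one : ∫ x, pp x ∂μ0 = 1) (hpm_one : ∫ x, pm x ∂μ0 = 1) :
    IsLUB {r : ℝ | ∃ u : X → ℝ, Measurable u ∧ (∀ x, u x ∈ Set.Icc (0 : ℝ) 1) ∧
        r = (∫ x, pp x * u x ∂μ0) + ∫ x, pm x * Real.sqrt (1 - u x ^ 2) ∂μ0}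
      (∫ x, Real.sqrt (pp x ^ 2 + pm x ^ 2) ∂μ0) := by
  set f : X → ℝ := fun x => Real.sqrt (pp x ^ 2 + pm x ^ 2) with hf
  have hs_pos : ∀ x, 0 < f x := fun x =>
    Real.sqrt_pos.mpr (by nlinarith [hpp_nonneg x, hpm_pos x, sq_nonneg (pp x)])
  have hs2 : ∀ x, f x ^ 2 = pp x ^ 2 + pm x ^ 2 := fun x =>
    Real.sq_sqrt (by nlinarith [hpp_nonneg x, (hpm_pos x).le, sq_nonneg (pp x), sq_nonneg (pm x)])
  have hf_meas : Measurable f := ((hpp_meas.pow_const 2).add (hpm_meas.pow_const 2)).sqrt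
  have hf_int : Integrable f μ0 := by
    refine (hpp_int.add hpm_int).mono' hf_meas.aestronglyMeasurable (ae_of_all _ fun x => ?_)
    rw [Real.norm_eq_abs, abs_of_nonneg (hs_pos x).le]
    have h1 : pp x ^ 2 + pm x ^ 2 ≤ (pp x + pm x) ^ 2 := by
      nlinarith [hpp_nonneg x, (hpm_pos x).le]
    calc f x ≤ Real.sqrt ((pp x + pm x) ^ 2) := Real.sqrt_le_sqrt h1
      _ = pp x + pm x := Real.sqrt_sq (by nlinarith [hpp_nonneg x, (hpm_pos x).le])
  -- integrability of the two pieces for any admissible u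
  have hint1 : ∀ u : X → ℝ, Measurable u → (∀ x, u x ∈ Set.Icc (0:ℝ) 1) →
      Integrable (fun x => pp x * u x) μ0 := by
    intro u hu hub
    refine hpp_int.mono' (hpp_meas.mul hu).aestronglyMeasurable (ae_of_all _ fun x => ?_)
    rw [Real.norm_eq_abs, abs_mul, abs_of_nonneg (hpp_nonneg x),
      abs_of_nonneg (hub x).1]
    nlinarith [hpp_nonneg x, (hub x).1, (hub x).2]
  have hint2 : ∀ u : X → ℝ, Measurable u → (∀ x, u x ∈ Set.Icc (0:ℝ) 1) →
      Integrable (fun x => pm x * Real.sqrt (1 - u x ^ 2)) μ0 := by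
    intro u hu hub
    refine hpm_int.mono' (hpm_meas.mul
      ((measurable_const.sub (hu.pow_const 2)).sqrt)).aestronglyMeasurable
      (ae_of_all _ fun x => ?_)
    rw [Real.norm_eq_abs, abs_mul, abs_of_nonneg (hpm_pos x).le,
      abs_of_nonneg (Real.sqrt_nonneg _)]
    have h1 : Real.sqrt (1 - u x ^ 2) ≤ 1 :=
      Real.sqrt_le_one.mpr (by nlinarith [(hub x).1])
    nlinarith [(hpm_pos x).le, Real.sqrt_nonneg (1 - u x ^ 2)]
  constructor
  · -- upper bound
    rintro r ⟨u, hu, hub, rfl⟩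
    rw [← integral_add (hint1 u hu hub) (hint2 u hu hub)]
    refine integral_mono ((hint1 u hu hub).add (hint2 u hu hub)) hf_int fun x => ?_
    -- pointwise Cauchy-Schwarz
    set t := Real.sqrt (1 - u x ^ 2) with ht
    have ht2 : t ^ 2 = 1 - u x ^ 2 := Real.sq_sqrt (by nlinarith [(hub x).1, (hub x).2])
    have htn : 0 ≤ t := Real.sqrt_nonneg _
    have hlhs : 0 ≤ pp x * u x + pm x * t := by
      have := (hub x).1
      nlinarith [hpp_nonneg x, (hpm_pos x).le]
    have hsq : (pp x * u x + pm x * t) ^ 2 ≤ pp x ^ 2 + pm x ^ 2 := by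
      nlinarith [sq_nonneg (pp x * t - pm x * u x), (hub x).1]
    calc pp x * u x + pm x * t
        = Real.sqrt ((pp x * u x + pm x * t) ^ 2) := (Real.sqrt_sq hlhs).symm
      _ ≤ f x := Real.sqrt_le_sqrt hsq
  · -- the value is attained at u₀ = pp / f
    rintro b hb
    refine hb ⟨fun x => pp x / f x, hpp_meas.div hf_meas, fun x => ?_, ?_⟩
    · constructor
      · exact div_nonneg (hpp_nonneg x) (hs_pos x).le
      · rw [div_le_one (hs_pos x)]
        calc pp x = Real.sqrt (pp x ^ 2) := (Real.sqrt_sq (hpp_nonneg x)).symm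
          _ ≤ f x := Real.sqrt_le_sqrt (by nlinarith [sq_nonneg (pm x)])
    · have key : ∀ x, pp x * (pp x / f x) +
          pm x * Real.sqrt (1 - (pp x / f x) ^ 2) = f x := by
        intro x
        have hne : f x ≠ 0 := (hs_pos x).ne'
        have h1 : 1 - (pp x / f x) ^ 2 = (pm x / f x) ^ 2 := by
          field_simp
          nlinarith [hs2 x]
        rw [h1, Real.sqrt_sq (div_nonneg (hpm_pos x).le (hs_pos x).le)]
        field_simp
        nlinarith [hs2 x]
      have hub0 : ∀ x, pp x / f x ∈ Set.Icc (0:ℝ) 1 := by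
        intro x
        constructor
        · exact div_nonneg (hpp_nonneg x) (hs_pos x).le
        · rw [div_le_one (hs_pos x)]
          calc pp x = Real.sqrt (pp x ^ 2) := (Real.sqrt_sq (hpp_nonneg x)).symm
            _ ≤ f x := Real.sqrt_le_sqrt (by nlinarith [sq_nonneg (pm x)])
      rw [← integral_add (hint1 (fun x => pp x / f x) (hpp_meas.div hf_meas) hub0)
        (hint2 (fun x => pp x / f x) (hpp_meas.div hf_meas) hub0)]
      exact (integral_congr_ae (ae_of_all _ fun x => (key x))).symm
end
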